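/- arXiv:0901.1190 — 3 statements merged into one kernel-verified Lean document; each statement's English description precedes it below -/
import Mathlib

section
/- Let α > d and define for a matrix A = (A_{kℓ})_{k,ℓ∈ℤ^d} the norm ‖A‖_α = sup_{k,ℓ} |A_{kℓ}|(1 + |k-ℓ|^α). Then there exists a constant C_α > 0 such that for all matrices A, B with finite norm, ‖AB‖_α ≤ C_α ‖A‖_α ‖B‖_α, where (AB)_{kℓ} = Σ_p A_{kp} B_{pℓ}. -/
/-- Euclidean norm of a point of `ℤ^d`. -/
noncomputable def znorm {d : ℕ} (k : Fin d → ℤ) : ℝ :=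
  Real.sqrt (∑ i, ((k i : ℝ)) ^ 2)

lemma znorm_nonneg {d : ℕ} (k : Fin d → ℤ) : 0 ≤ znorm k := Real.sqrt_nonneg _

lemma abs_le_znorm {d : ℕ} (k : Fin d → ℤ) (i : Fin d) : |(k i : ℝ)| ≤ znorm k := by
  rw [← Real.sqrt_sq_eq_abs]
  exact Real.sqrt_le_sqrt (Finset.single_le_sum (f := fun j => ((k j : ℝ)) ^ 2)
    (fun j _ => sq_nonneg _) (Finset.mem_univ i))

lemma znorm_eq_norm {d : ℕ} (k : Fin d → ℤ) :
    znorm k = ‖(WithLp.equiv 2 (Fin d → ℝ)).symm (fun i => (k i : ℝ))‖ := by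
  rw [EuclideanSpace.norm_eq]
  simp [znorm, sq_abs]

lemma znorm_add_le {d : ℕ} (a b : Fin d → ℤ) : znorm (a + b) ≤ znorm a + znorm b := by
  rw [znorm_eq_norm, znorm_eq_norm, znorm_eq_norm]
  have h : (WithLp.equiv 2 (Fin d → ℝ)).symm (fun i => ((a + b) i : ℝ))
      = (WithLp.equiv 2 (Fin d → ℝ)).symm (fun i => (a i : ℝ))
        + (WithLp.equiv 2 (Fin d → ℝ)).symm (fun i => (b i : ℝ)) := by
    ext i
    simp
  rw [h]
  exact norm_add_le _ _

lemma summable_int_aux {β : ℝ} (hβ : 1 < β) :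
    Summable fun n : ℤ => 1 / (1 + |(n : ℝ)| ^ β) := by
  have h1 : Summable fun n : ℤ => |(n : ℝ)| ^ (-β) := Real.summable_abs_int_rpow hβ
  have h2 : Summable fun n : ℤ => (if n = 0 then (1 : ℝ) else 0) := by
    apply summable_of_ne_finset_zero (s := {0})
    intro b hb
    simp only [Finset.mem_singleton] at hb
    simp [hb]
  refine (h1.add h2).of_nonneg_of_le (fun n => by positivity) (fun n => ?_)
  rcases eq_or_ne n 0 with rfl | hn
  · simp [Real.zero_rpow (by linarith : β ≠ 0), Real.zero_rpow (by linarith : -β ≠ 0)]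
  · have hn' : (0:ℝ) < |(n:ℝ)| ^ β := by
      apply Real.rpow_pos_of_pos
      simpa using hn
    simp only [hn, if_false, add_zero, Real.rpow_neg (abs_nonneg _), ← one_div]
    exact one_div_le_one_div_of_le hn' (by linarith)

lemma summable_pi_prod {g : ℤ → ℝ} (hg0 : ∀ n, 0 ≤ g n) (hg : Summable g) (d : ℕ) :
    Summable fun q : Fin d → ℤ => ∏ i, g (q i) := by
  induction d with
  | zero =>
      exact Summable.of_finite
  | succ n ih =>
      have h := hg.mul_of_nonneg ih hg0 (fun q => Finset.prod_nonneg fun i _ => hg0 _)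
      rw [← (Fin.consEquiv (fun _ : Fin (n + 1) => ℤ)).summable_iff]
      refine h.congr fun x => ?_
      simp [Fin.consEquiv, Fin.prod_univ_succ]

lemma summable_znorm {d : ℕ} {α : ℝ} (hα : (d : ℝ) < α) :
    Summable fun q : Fin d → ℤ => 1 / (1 + znorm q ^ α) := by
  rcases Nat.eq_zero_or_pos d with rfl | hd
  · exact Summable.of_finite
  have hd' : (0:ℝ) < d := by exact_mod_cast hd
  set β := α / d with hβdef
  have hβ : 1 < β := (one_lt_div hd').mpr hα
  have hβd : β * d = α := div_mul_cancel₀ α hd'.ne'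
  have hsum := summable_pi_prod (g := fun n : ℤ => 1 / (1 + |(n : ℝ)| ^ β))
    (fun n => by show (0:ℝ) ≤ 1 / (1 + |(n : ℝ)| ^ β); positivity) (summable_int_aux hβ) d
  have hwq : ∀ q : Fin d → ℤ, (0:ℝ) < 1 + znorm q ^ α := fun q =>
    add_pos_of_pos_of_nonneg one_pos (Real.rpow_nonneg (znorm_nonneg q) α)
  refine (hsum.mul_left ((2:ℝ) ^ d)).of_nonneg_of_le
    (fun q => div_nonneg zero_le_one (hwq q).le) (fun q => ?_)
  have hprod : ∏ i, (1 + |(q i : ℝ)| ^ β) ≤ 2 ^ d * (1 + znorm q ^ α) := by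
    set N := znorm q with hN
    have hN0 : 0 ≤ N := znorm_nonneg q
    have hNα : (0:ℝ) ≤ N ^ α := Real.rpow_nonneg hN0 α
    have step1 : ∏ i, (1 + |(q i : ℝ)| ^ β) ≤ (1 + N ^ β) ^ d := by
      calc ∏ i, (1 + |(q i : ℝ)| ^ β) ≤ ∏ _i : Fin d, (1 + N ^ β) := by
            apply Finset.prod_le_prod (fun i _ => by positivity)
            intro i _
            have := Real.rpow_le_rpow (abs_nonneg _) (abs_le_znorm q i)
              (by linarith : (0:ℝ) ≤ β)
            linarith
        _ = (1 + N ^ β) ^ d := by simp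
    rcases le_total N 1 with h1 | h1
    · have hb1 : N ^ β ≤ 1 := Real.rpow_le_one hN0 h1 (by linarith)
      have h2 : (1 + N ^ β) ^ d ≤ 2 ^ d :=
        pow_le_pow_left₀ (by positivity) (by linarith) d
      nlinarith [pow_nonneg (by norm_num : (0:ℝ) ≤ 2) d]
    · have h1' : 1 ≤ N ^ β := Real.one_le_rpow h1 (by linarith)
      have h2 : (1 + N ^ β) ^ d ≤ (2 * N ^ β) ^ d :=
        pow_le_pow_left₀ (by positivity) (by linarith) d
      have h3 : (2 * N ^ β) ^ d = 2 ^ d * N ^ α := by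
        rw [mul_pow, ← Real.rpow_natCast (N ^ β) d, ← Real.rpow_mul hN0, hβd]
      nlinarith [pow_nonneg (by norm_num : (0:ℝ) ≤ 2) d]
  have hP : 0 < ∏ i, (1 + |(q i : ℝ)| ^ β) := Finset.prod_pos
    (fun i _ => by show (0:ℝ) < 1 + |(q i : ℝ)| ^ β; positivity)
  have hw : (0:ℝ) < 1 + znorm q ^ α := hwq q
  have hrw : ∏ i, (1:ℝ) / (1 + |(q i : ℝ)| ^ β) = 1 / ∏ i, (1 + |(q i : ℝ)| ^ β) := by
    rw [Finset.prod_div_distrib, Finset.prod_const_one]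
  rw [hrw, mul_one_div, div_le_div_iff₀ hw hP, one_mul]
  exact hprod

theorem stmt_2 (d : ℕ) (α : ℝ) (hα : (d : ℝ) < α) :
    ∃ C : ℝ, 0 < C ∧
      ∀ (A B : (Fin d → ℤ) → (Fin d → ℤ) → ℂ) (nA nB : ℝ),
        (∀ k l, ‖A k l‖ * (1 + znorm (k - l) ^ α) ≤ nA) →
        (∀ k l, ‖B k l‖ * (1 + znorm (k - l) ^ α) ≤ nB) →
        (∀ k l, Summable fun p => ‖A k p‖ * ‖B p l‖) →
        ∀ k l, ‖∑' p, A k p * B p l‖ * (1 + znorm (k - l) ^ α) ≤ C * nA * nB := by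
  have hα0 : (0:ℝ) ≤ α := le_trans (Nat.cast_nonneg d) hα.le
  have hwpos : ∀ q : Fin d → ℤ, (0:ℝ) < 1 + znorm q ^ α := fun q =>
    add_pos_of_pos_of_nonneg one_pos (Real.rpow_nonneg (znorm_nonneg q) α)
  have hS : Summable fun q : Fin d → ℤ => 1 / (1 + znorm q ^ α) := summable_znorm hα
  set S := ∑' q : Fin d → ℤ, 1 / (1 + znorm q ^ α) with hSdef
  have hS0 : 0 ≤ S := tsum_nonneg (fun q => div_nonneg zero_le_one (hwpos q).le)
  have h2α : (0:ℝ) < 2 ^ α := Real.rpow_pos_of_pos two_pos α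
  have h2α1 : (1:ℝ) ≤ 2 ^ α := Real.one_le_rpow one_le_two hα0
  refine ⟨2 * 2 ^ α * (S + 1), by positivity, ?_⟩
  intro A B nA nB hA hB hAB k l
  have hnA : 0 ≤ nA := le_trans (mul_nonneg (norm_nonneg _) (hwpos _).le) (hA k k)
  have hnB : 0 ≤ nB := le_trans (mul_nonneg (norm_nonneg _) (hwpos _).le) (hB k k)
  set w := 1 + znorm (k - l) ^ α with hwdef
  have hw : 0 < w := hwpos _
  have hkey : ∀ p, ‖A k p‖ * ‖B p l‖ * w ≤
      2 ^ α * nA * nB * (1 / (1 + znorm (p - l) ^ α) + 1 / (1 + znorm (k - p) ^ α)) := by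
    intro p
    set a := 1 + znorm (k - p) ^ α with ha'
    set b := 1 + znorm (p - l) ^ α with hb'
    have ha : 0 < a := hwpos _
    have hb : 0 < b := hwpos _
    have hAle : ‖A k p‖ ≤ nA / a := (le_div_iff₀ ha).mpr (hA k p)
    have hBle : ‖B p l‖ ≤ nB / b := (le_div_iff₀ hb).mpr (hB p l)
    have htri : znorm (k - l) ≤ znorm (k - p) + znorm (p - l) := by
      have hkl : k - l = (k - p) + (p - l) := by abel
      rw [hkl]
      exact znorm_add_le _ _
    have hwle : w ≤ 2 ^ α * (a + b) := by
      set u := znorm (k - p) with hu'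
      set v := znorm (p - l) with hv'
      have hu : 0 ≤ u := znorm_nonneg _
      have hv : 0 ≤ v := znorm_nonneg _
      have hua : 0 ≤ u ^ α := Real.rpow_nonneg hu α
      have hvb : 0 ≤ v ^ α := Real.rpow_nonneg hv α
      have h1 : znorm (k - l) ^ α ≤ (u + v) ^ α :=
        Real.rpow_le_rpow (znorm_nonneg _) htri hα0
      have h2 : (u + v) ^ α ≤ 2 ^ α * (u ^ α + v ^ α) := by
        have hmax : u + v ≤ 2 * max u v := by
          rcases le_total u v with h | h
          · rw [max_eq_right h]; linarith
          · rw [max_eq_left h]; linarith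
        have h3 : (u + v) ^ α ≤ (2 * max u v) ^ α :=
          Real.rpow_le_rpow (by linarith) hmax hα0
        have h4 : (2 * max u v) ^ α = 2 ^ α * (max u v) ^ α :=
          Real.mul_rpow (by norm_num) (le_max_of_le_left hu)
        have h5 : (max u v) ^ α ≤ u ^ α + v ^ α := by
          rcases le_total u v with h | h
          · rw [max_eq_right h]; linarith
          · rw [max_eq_left h]; linarith
        calc (u + v) ^ α ≤ 2 ^ α * (max u v) ^ α := by rw [← h4]; exact h3
          _ ≤ 2 ^ α * (u ^ α + v ^ α) := by nlinarith
      have hle : w ≤ 1 + 2 ^ α * (u ^ α + v ^ α) := by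
        rw [hwdef]; linarith
      have : a + b = 2 + u ^ α + v ^ α := by rw [ha', hb']; ring
      rw [this]
      nlinarith
    calc ‖A k p‖ * ‖B p l‖ * w
        ≤ (nA / a) * (nB / b) * (2 ^ α * (a + b)) := by
          apply mul_le_mul (mul_le_mul hAle hBle (norm_nonneg _) (by positivity)) hwle hw.le
            (by positivity)
      _ = 2 ^ α * nA * nB * (1 / b + 1 / a) := by
          field_simp
  have hg1 : Summable fun p : Fin d → ℤ => 1 / (1 + znorm (p - l) ^ α) :=
    ((Equiv.subRight l).summable_iff.mpr hS).congr (fun p => rfl)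
  have hg2 : Summable fun p : Fin d → ℤ => 1 / (1 + znorm (k - p) ^ α) :=
    ((Equiv.subLeft k).summable_iff.mpr hS).congr (fun p => rfl)
  have ht1 : ∑' p : Fin d → ℤ, 1 / (1 + znorm (p - l) ^ α) = S :=
    (Equiv.subRight l).tsum_eq fun q => 1 / (1 + znorm q ^ α)
  have ht2 : ∑' p : Fin d → ℤ, 1 / (1 + znorm (k - p) ^ α) = S :=
    (Equiv.subLeft k).tsum_eq fun q => 1 / (1 + znorm q ^ α)
  have hs : Summable fun p => ‖A k p * B p l‖ := (hAB k l).congr (fun p => (norm_mul _ _).symm)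
  have step0 : ‖∑' p, A k p * B p l‖ ≤ ∑' p, ‖A k p‖ * ‖B p l‖ := by
    calc ‖∑' p, A k p * B p l‖ ≤ ∑' p, ‖A k p * B p l‖ := norm_tsum_le_tsum_norm hs
      _ = ∑' p, ‖A k p‖ * ‖B p l‖ := tsum_congr fun p => norm_mul _ _
  have hRHS : Summable fun p : Fin d → ℤ =>
      2 ^ α * nA * nB * (1 / (1 + znorm (p - l) ^ α) + 1 / (1 + znorm (k - p) ^ α)) :=
    (hg1.add hg2).mul_left _
  calc ‖∑' p, A k p * B p l‖ * w
      ≤ (∑' p, ‖A k p‖ * ‖B p l‖) * w := mul_le_mul_of_nonneg_right step0 hw.le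
    _ = ∑' p, ‖A k p‖ * ‖B p l‖ * w := tsum_mul_right.symm
    _ ≤ ∑' p : Fin d → ℤ,
        2 ^ α * nA * nB * (1 / (1 + znorm (p - l) ^ α) + 1 / (1 + znorm (k - p) ^ α)) :=
          Summable.tsum_le_tsum hkey ((hAB k l).mul_right w) hRHS
    _ = 2 ^ α * nA * nB * (S + S) := by
          rw [tsum_mul_left, Summable.tsum_add hg1 hg2, ht1, ht2]
    _ ≤ 2 * 2 ^ α * (S + 1) * nA * nB := by
          nlinarith [mul_nonneg (mul_nonneg h2α.le hnA) hnB]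
end

section
/- Let G(x) = 4 arctan(x/(2 - 2^{1/3})) - 2 arctan(2^{1/3} x/(2 - 2^{1/3})). Then for all x > 0, G is strictly increasing and 0 < G(x) < π. -/
/-! With `a = 2^{1/3}` and `c = 2 - a`, `G x = g (x / c)` for `g y = 4 arctan y - 2 arctan (a y)`.
The derivative `4 / (1 + y²) - 2a / (1 + a²y²)` has numerator `(4 - 2a) + (4a² - 2a) y²`, positive
because `1/2 ≤ a < 2`; so `g` is strictly increasing with `g 0 = 0`. For `y ≥ 0` and `a ≥ 1`,
`arctan (a y) ≥ arctan y` gives `g y ≤ 2 arctan y < π`. -/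

noncomputable def Gfun (x : ℝ) : ℝ :=
  4 * Real.arctan (x / (2 - 2 ^ ((1:ℝ)/3)))
    - 2 * Real.arctan (2 ^ ((1:ℝ)/3) * x / (2 - 2 ^ ((1:ℝ)/3)))

open Real

section FourArctanSubTwoArctan

variable {a : ℝ}

lemma hasDerivAt_four_arctan_sub_two_arctan_mul (x : ℝ) :
    HasDerivAt (fun y => 4 * arctan y - 2 * arctan (a * y))
      (4 / (1 + x ^ 2) - 2 * a / (1 + (a * x) ^ 2)) x := by
  have hax : HasDerivAt (fun y => arctan (a * y)) (1 / (1 + (a * x) ^ 2) * a) x := by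
    simpa using ((hasDerivAt_id x).const_mul a).arctan
  exact (((hasDerivAt_arctan x).const_mul 4).sub (hax.const_mul 2)).congr_deriv (by ring)

lemma four_div_one_add_sq_sub_pos (ha₁ : 1 / 2 ≤ a) (ha₂ : a < 2) (x : ℝ) :
    0 < 4 / (1 + x ^ 2) - 2 * a / (1 + (a * x) ^ 2) := by
  rw [sub_pos, div_lt_div_iff₀ (by positivity) (by positivity)]
  nlinarith [mul_nonneg (by nlinarith : (0:ℝ) ≤ 4 * a ^ 2 - 2 * a) (sq_nonneg x)]

lemma strictMono_four_arctan_sub_two_arctan_mul (ha₁ : 1 / 2 ≤ a) (ha₂ : a < 2) :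
    StrictMono fun y => 4 * arctan y - 2 * arctan (a * y) :=
  strictMono_of_hasDerivAt_pos hasDerivAt_four_arctan_sub_two_arctan_mul
    (four_div_one_add_sq_sub_pos ha₁ ha₂)

lemma four_arctan_sub_two_arctan_mul_lt_pi (ha : 1 ≤ a) {y : ℝ} (hy : 0 ≤ y) :
    4 * arctan y - 2 * arctan (a * y) < π := by
  have : arctan y ≤ arctan (a * y) := arctan_strictMono.monotone (le_mul_of_one_le_left hy ha)
  linarith [arctan_lt_pi_div_two y]

end FourArctanSubTwoArctan

theorem stmt_9 :
    StrictMonoOn Gfun (Set.Ioi 0) ∧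
    ∀ x : ℝ, 0 < x → 0 < Gfun x ∧ Gfun x < Real.pi := by
  set a : ℝ := 2 ^ ((1:ℝ)/3)
  have ha₁ : 1 < a := one_lt_rpow one_lt_two (by norm_num)
  have ha₂ : a < 2 :=
    (rpow_lt_rpow_of_exponent_lt one_lt_two (by norm_num : (1:ℝ)/3 < 1)).trans_eq (rpow_one 2)
  have hc : 0 < 2 - a := sub_pos.2 ha₂
  have hG : Gfun = (fun y => 4 * arctan y - 2 * arctan (a * y)) ∘ (· / (2 - a)) := by
    funext x
    simp only [Gfun, Function.comp_apply, mul_div_assoc, a]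
  have hmono : StrictMono Gfun := hG ▸
    (strictMono_four_arctan_sub_two_arctan_mul (by linarith) ha₂).comp
      (strictMono_div_right_of_pos hc)
  refine ⟨hmono.strictMonoOn _, fun x hx => ⟨?_, ?_⟩⟩
  · simpa [Gfun] using hmono hx
  · rw [hG]
    exact four_arctan_sub_two_arctan_mul_lt_pi ha₁.le (div_nonneg hx.le hc.le)
end

section
/- Let A be a diagonal operator on ℓ²(ℤ^d) with real diagonal entries λ_k satisfying |λ_k - λ_ℓ| ≤ π - δ for some δ > 0 and all k, ℓ, and let V be a bounded matrix with ‖V‖_α < ∞ for α > d. Then the series Z₁ = Σ_{k≥0} (B_k/k!) i^k ad_A^k(V), where ad_A(W) = AW - WA, converges absolutely in the norm ‖·‖_α and its entries are given by (Z₁)_{kℓ} = V_{kℓ} · i(λ_k - λ_ℓ)/(e^{i(λ_k - λ_ℓ)} - 1) (with the convention that the factor equals 1 when λ_k = λ_ℓ). -/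
/-- The `α`-norm of a matrix indexed by `ℤ^d`. -/
noncomputable def anorm {d : ℕ} (α : ℝ) (A : (Fin d → ℤ) → (Fin d → ℤ) → ℂ) : ℝ :=
  ⨆ p : (Fin d → ℤ) × (Fin d → ℤ), ‖A p.1 p.2‖ * (1 + znorm (p.1 - p.2) ^ α)

open Real Finset
open scoped Nat

theorem PowerSeries.tsum_coeff_mul_mul_pow {R : Type*} [NormedCommRing R] [CompleteSpace R]
    (f g : PowerSeries R) (z : R) (hf : Summable fun n => ‖coeff n f * z ^ n‖)
    (hg : Summable fun n => ‖coeff n g * z ^ n‖) :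
    ∑' n, coeff n (f * g) * z ^ n = (∑' n, coeff n f * z ^ n) * ∑' n, coeff n g * z ^ n := by
  rw [tsum_mul_tsum_eq_tsum_sum_antidiagonal_of_summable_norm hf hg]
  refine tsum_congr fun n => ?_
  rw [coeff_mul, sum_mul]
  refine sum_congr rfl fun kl hkl => ?_
  rw [← mem_antidiagonal.mp hkl, pow_add]
  ring

theorem abs_bernoulli_two_mul_div_factorial_le {k : ℕ} (hk : k ≠ 0) :
    |(bernoulli (2 * k) : ℝ)| / (2 * k)! ≤ 4 / (2 * π) ^ (2 * k) := by
  set S : ℝ := (-1) ^ (k + 1) * 2 ^ (2 * k - 1) * π ^ (2 * k) * bernoulli (2 * k) / (2 * k)!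
  have hzeta := hasSum_zeta_nat hk
  have hS_nonneg : 0 ≤ S := hzeta.nonneg fun _ => by positivity
  -- `ζ(2k) ≤ ζ(2) = π²/6 < 2`
  have hS_le : S ≤ 2 := by
    have : S ≤ π ^ 2 / 6 := hasSum_le (fun m => ?_) hzeta hasSum_zeta_two
    · nlinarith [pi_lt_d2, pi_pos]
    rcases m.eq_zero_or_pos with rfl | hm
    · simp [hk]
    · exact one_div_le_one_div_of_le (by positivity)
        (pow_le_pow_right₀ (by exact_mod_cast hm) (by omega))
  have habs_S : |S| = (2 * π) ^ (2 * k) / 2 * (|(bernoulli (2 * k) : ℝ)| / (2 * k)!) := by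
    have : (2 : ℝ) ^ (2 * k) = 2 * 2 ^ (2 * k - 1) := by
      rw [← pow_succ', Nat.sub_add_cancel (by omega)]
    simp only [S, abs_div, abs_mul, abs_pow, abs_neg, abs_one, one_pow, abs_two, abs_of_pos pi_pos,
      Nat.abs_cast, mul_pow, this]
    ring
  rw [le_div_iff₀ (by positivity)]
  nlinarith [abs_of_nonneg hS_nonneg]

theorem abs_bernoulli_div_factorial_le (n : ℕ) :
    |(bernoulli n : ℝ)| / n ! ≤ 4 / (2 * π) ^ n := by
  rcases n.even_or_odd with ⟨k, rfl⟩ | hodd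
  · rcases eq_or_ne k 0 with rfl | hk
    · norm_num
    · simpa [two_mul] using abs_bernoulli_two_mul_div_factorial_le hk
  · rcases eq_or_ne n 1 with rfl | h1
    · rw [bernoulli_one, le_div_iff₀ (by positivity)]
      norm_num
      linarith [pi_le_four]
    · rw [bernoulli_eq_zero_of_odd hodd (by grind [Odd.pos hodd])]
      simp only [Rat.cast_zero, abs_zero, zero_div]
      positivity

theorem norm_bernoulli_div_factorial_mul_pow_le (z : ℂ) (n : ℕ) :
    ‖(bernoulli n : ℂ) / n ! * z ^ n‖ ≤ 4 * (‖z‖ / (2 * π)) ^ n := by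
  calc ‖(bernoulli n : ℂ) / n ! * z ^ n‖ = |(bernoulli n : ℝ)| / n ! * ‖z‖ ^ n := by
        rw [norm_mul, norm_div, norm_pow, Complex.norm_ratCast, Complex.norm_natCast]
    _ ≤ 4 / (2 * π) ^ n * ‖z‖ ^ n :=
        mul_le_mul_of_nonneg_right (abs_bernoulli_div_factorial_le n) (by positivity)
    _ = 4 * (‖z‖ / (2 * π)) ^ n := by rw [div_pow]; ring

theorem summable_norm_bernoulli_div_factorial_mul_pow {z : ℂ} (hz : ‖z‖ < 2 * π) :
    Summable fun n => ‖(bernoulli n : ℂ) / n ! * z ^ n‖ := by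
  refine .of_nonneg_of_le (fun _ => norm_nonneg _) (norm_bernoulli_div_factorial_mul_pow_le z)
    ((summable_geometric_of_lt_one (by positivity) ?_).mul_left 4)
  rwa [div_lt_one (by positivity)]

theorem coeff_bernoulliPowerSeries_complex (n : ℕ) :
    PowerSeries.coeff n (bernoulliPowerSeries ℂ) = (bernoulli n : ℂ) / n ! := by
  simp [bernoulliPowerSeries]

theorem hasSum_coeff_exp_sub_one_mul_pow (z : ℂ) :
    HasSum (fun n => PowerSeries.coeff n (PowerSeries.exp ℂ - 1) * z ^ n) (Complex.exp z - 1) := by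
  have hcoeff : (fun n => PowerSeries.coeff n (PowerSeries.exp ℂ - 1) * z ^ n) =
      fun n => z ^ n / (n ! : ℂ) - if n = 0 then 1 else 0 := by
    ext n
    rcases eq_or_ne n 0 with rfl | hn
    · simp
    · simp [hn, div_eq_inv_mul]
  rw [hcoeff, Complex.exp_eq_exp_ℂ]
  exact (NormedSpace.expSeries_div_hasSum_exp z).sub (hasSum_ite_eq 0 1)

theorem summable_norm_coeff_exp_sub_one_mul_pow (z : ℂ) :
    Summable fun n => ‖PowerSeries.coeff n (PowerSeries.exp ℂ - 1) * z ^ n‖ := by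
  refine .of_nonneg_of_le (fun _ => norm_nonneg _) (fun n => ?_)
    (Real.summable_pow_div_factorial ‖z‖)
  rcases eq_or_ne n 0 with rfl | hn
  · simp
  · simp [hn, norm_pow, div_eq_inv_mul]

theorem tsum_bernoulli_div_factorial_mul_pow_mul_exp_sub_one {z : ℂ} (hz : ‖z‖ < 2 * π) :
    (∑' n, (bernoulli n : ℂ) / n ! * z ^ n) * (Complex.exp z - 1) = z := by
  have h := PowerSeries.tsum_coeff_mul_mul_pow (bernoulliPowerSeries ℂ) (PowerSeries.exp ℂ - 1) z
    (by simpa only [coeff_bernoulliPowerSeries_complex] using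
      summable_norm_bernoulli_div_factorial_mul_pow hz)
    (summable_norm_coeff_exp_sub_one_mul_pow z)
  rw [bernoulliPowerSeries_mul_exp_sub_one, (hasSum_coeff_exp_sub_one_mul_pow z).tsum_eq] at h
  simpa [coeff_bernoulliPowerSeries_complex, PowerSeries.coeff_X] using h.symm

theorem Complex.exp_ne_one_of_norm_lt {z : ℂ} (hz : ‖z‖ < 2 * π) (hz0 : z ≠ 0) :
    Complex.exp z ≠ 1 := by
  rintro h
  obtain ⟨n, rfl⟩ := Complex.exp_eq_one_iff.mp h
  have hn : n ≠ 0 := by rintro rfl; simp at hz0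
  have : (1 : ℝ) ≤ |(n : ℝ)| := by exact_mod_cast Int.one_le_abs hn
  simp only [norm_mul, Complex.norm_intCast, Complex.norm_ofNat, Complex.norm_real, Complex.norm_I,
    norm_of_nonneg pi_pos.le, mul_one] at hz
  nlinarith [pi_pos]

theorem tsum_bernoulli_div_factorial_mul_pow {z : ℂ} (hz : ‖z‖ < 2 * π) (hz0 : z ≠ 0) :
    ∑' n, (bernoulli n : ℂ) / n ! * z ^ n = z / (Complex.exp z - 1) := by
  rw [eq_div_iff (sub_ne_zero.mpr (Complex.exp_ne_one_of_norm_lt hz hz0))]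
  exact tsum_bernoulli_div_factorial_mul_pow_mul_exp_sub_one hz

theorem one_add_znorm_rpow_nonneg {d : ℕ} (α : ℝ) (k : Fin d → ℤ) : 0 ≤ 1 + znorm k ^ α :=
  add_nonneg zero_le_one (rpow_nonneg (sqrt_nonneg _) α)

theorem anorm_nonneg {d : ℕ} (α : ℝ) (W : (Fin d → ℤ) → (Fin d → ℤ) → ℂ) : 0 ≤ anorm α W :=
  Real.iSup_nonneg fun _ => mul_nonneg (norm_nonneg _) (one_add_znorm_rpow_nonneg α _)

theorem anorm_le {d : ℕ} {α C : ℝ} {W : (Fin d → ℤ) → (Fin d → ℤ) → ℂ}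
    (h : ∀ p q, ‖W p q‖ * (1 + znorm (p - q) ^ α) ≤ C) : anorm α W ≤ C :=
  ciSup_le fun pq => h pq.1 pq.2

theorem summable_anorm_of_le {d : ℕ} {α : ℝ} {W : ℕ → (Fin d → ℤ) → (Fin d → ℤ) → ℂ}
    {c : ℕ → ℝ} (hc : Summable c) (h : ∀ n p q, ‖W n p q‖ * (1 + znorm (p - q) ^ α) ≤ c n) :
    Summable fun n => anorm α (W n) :=
  .of_nonneg_of_le (fun n => anorm_nonneg α (W n)) (fun n => anorm_le (h n)) hc

theorem stmt_13_general (d : ℕ) (α δ : ℝ) (hδ : 0 < δ)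
    (lam : (Fin d → ℤ) → ℝ)
    (hlam : ∀ p q, |lam p - lam q| ≤ Real.pi - δ)
    (V : (Fin d → ℤ) → (Fin d → ℤ) → ℂ) (nV : ℝ)
    (hV : ∀ p q, ‖V p q‖ * (1 + znorm (p - q) ^ α) ≤ nV) :
    -- absolute convergence of the series `Z₁ = Σ_k (B_k/k!) iᵏ ad_A^k (V)` in the `α`-norm,
    -- where `(ad_A^n V)_{pq} = (λ_p - λ_q)^n V_{pq}` since `A` is diagonal
    (Summable fun n : ℕ => anorm α
        (fun p q => ((bernoulli n : ℚ) : ℂ) / (Nat.factorial n)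
          * (Complex.I * ((lam p - lam q : ℝ) : ℂ)) ^ n * V p q)) ∧
    (∀ p q, Summable fun n : ℕ =>
        ((bernoulli n : ℚ) : ℂ) / (Nat.factorial n)
          * (Complex.I * ((lam p - lam q : ℝ) : ℂ)) ^ n * V p q) ∧
    (∀ p q, lam p = lam q →
        (∑' n : ℕ, ((bernoulli n : ℚ) : ℂ) / (Nat.factorial n)
          * (Complex.I * ((lam p - lam q : ℝ) : ℂ)) ^ n * V p q) = V p q) ∧
    (∀ p q, lam p ≠ lam q →
        (∑' n : ℕ, ((bernoulli n : ℚ) : ℂ) / (Nat.factorial n)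
          * (Complex.I * ((lam p - lam q : ℝ) : ℂ)) ^ n * V p q)
        = V p q * (Complex.I * ((lam p - lam q : ℝ) : ℂ))
            / (Complex.exp (Complex.I * ((lam p - lam q : ℝ) : ℂ)) - 1)) := by
  have hz : ∀ p q, ‖Complex.I * ((lam p - lam q : ℝ) : ℂ)‖ ≤ π - δ := by
    intro p q
    rw [norm_mul, Complex.norm_I, one_mul, Complex.norm_real, norm_eq_abs]
    exact hlam p q
  have hz2π : ∀ p q, ‖Complex.I * ((lam p - lam q : ℝ) : ℂ)‖ < 2 * π := fun p q => by
    linarith [hz p q, pi_pos]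
  have hρ : (π - δ) / (2 * π) < 1 := by rw [div_lt_one (by positivity)]; linarith [pi_pos]
  refine ⟨summable_anorm_of_le ((summable_geometric_of_lt_one ?_ hρ).mul_left (4 * nV))
    fun n p q => ?_, fun p q => ?_, fun p q hpq => ?_, fun p q hpq => ?_⟩
  · exact div_nonneg ((norm_nonneg _).trans (hz 0 0)) (by positivity)
  · have hb := (norm_bernoulli_div_factorial_mul_pow_le _ n).trans
      (mul_le_mul_of_nonneg_left (pow_le_pow_left₀ (by positivity)
        (div_le_div_of_nonneg_right (hz p q) (by positivity)) n) zero_le_four)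
    rw [norm_mul, mul_assoc, mul_right_comm 4]
    exact mul_le_mul hb (hV p q)
      (mul_nonneg (norm_nonneg _) (one_add_znorm_rpow_nonneg α (p - q))) ((norm_nonneg _).trans hb)
  · exact (summable_norm_bernoulli_div_factorial_mul_pow (hz2π p q)).of_norm.mul_right _
  · rw [tsum_eq_single 0 fun n hn => by simp [hpq, hn]]
    simp
  · rw [tsum_mul_right, tsum_bernoulli_div_factorial_mul_pow (hz2π p q) (by simpa [sub_eq_zero])]
    ring

theorem stmt_13 (d : ℕ) (α δ : ℝ) (hα : (d : ℝ) < α) (hδ : 0 < δ)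
    (lam : (Fin d → ℤ) → ℝ)
    (hlam : ∀ p q, |lam p - lam q| ≤ Real.pi - δ)
    (V : (Fin d → ℤ) → (Fin d → ℤ) → ℂ) (nV : ℝ)
    (hV : ∀ p q, ‖V p q‖ * (1 + znorm (p - q) ^ α) ≤ nV) :
    -- absolute convergence of the series `Z₁ = Σ_k (B_k/k!) iᵏ ad_A^k (V)` in the `α`-norm,
    -- where `(ad_A^n V)_{pq} = (λ_p - λ_q)^n V_{pq}` since `A` is diagonal
    (Summable fun n : ℕ => anorm α
        (fun p q => ((bernoulli n : ℚ) : ℂ) / (Nat.factorial n)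
          * (Complex.I * ((lam p - lam q : ℝ) : ℂ)) ^ n * V p q)) ∧
    (∀ p q, Summable fun n : ℕ =>
        ((bernoulli n : ℚ) : ℂ) / (Nat.factorial n)
          * (Complex.I * ((lam p - lam q : ℝ) : ℂ)) ^ n * V p q) ∧
    (∀ p q, lam p = lam q →
        (∑' n : ℕ, ((bernoulli n : ℚ) : ℂ) / (Nat.factorial n)
          * (Complex.I * ((lam p - lam q : ℝ) : ℂ)) ^ n * V p q) = V p q) ∧
    (∀ p q, lam p ≠ lam q →
        (∑' n : ℕ, ((bernoulli n : ℚ) : ℂ) / (Nat.factorial n)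
          * (Complex.I * ((lam p - lam q : ℝ) : ℂ)) ^ n * V p q)
        = V p q * (Complex.I * ((lam p - lam q : ℝ) : ℂ))
            / (Complex.exp (Complex.I * ((lam p - lam q : ℝ) : ℂ)) - 1)) :=
  stmt_13_general d α δ hδ lam hlam V nV hV
end
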